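/- Let S be a 4-element subset of ℙ²(𝔽₄) such that no three points of S are collinear. Then there are exactly 2 points p ∈ ℙ²(𝔽₄) \ S such that no three points of S ∪ {p} are collinear. -/
import Mathlib


open scoped LinearAlgebra.Projectivization

open Projectivization Submodule

section Generic
variable {K V : Type*} [Field K] [AddCommGroup V] [Module K V]

lemma dep_mk_iff (v : Fin 3 → V) (hv : ∀ i, v i ≠ 0) :
    (Dependent fun i => Projectivization.mk K (v i) (hv i)) ↔ ¬ LinearIndependent K v := by
  rw [dependent_iff]
  constructor
  · intro h hl
    apply h
    choose a ha using fun i => exists_smul_eq_mk_rep K (v i) (hv i)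
    have : (Projectivization.rep ∘ fun i => Projectivization.mk K (v i) (hv i))
        = fun i => a i • v i := funext fun i => (ha i).symm
    rw [this]
    exact hl.units_smul a
  · intro h hl
    apply h
    choose a ha using fun i => exists_smul_eq_mk_rep K (v i) (hv i)
    have : (Projectivization.rep ∘ fun i => Projectivization.mk K (v i) (hv i))
        = fun i => a i • v i := funext fun i => (ha i).symm
    rw [this] at hl
    have := hl.units_smul a⁻¹
    convert this using 1
    ext i
    simp

lemma dep_mk_iff' (v : Fin 3 → V) (hv : ∀ i, v i ≠ 0) (p : Fin 3 → ℙ K V)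
    (hp : ∀ i, p i = Projectivization.mk K (v i) (hv i)) :
    Dependent p ↔ ¬ LinearIndependent K v := by
  have : p = fun i => Projectivization.mk K (v i) (hv i) := funext hp
  rw [this, dep_mk_iff]

lemma dep_comp_equiv_iff (σ : Fin 3 ≃ Fin 3) (f : Fin 3 → ℙ K V) :
    Dependent (f ∘ σ) ↔ Dependent f := by
  rw [dependent_iff, dependent_iff, not_iff_not]
  have : Projectivization.rep ∘ (f ∘ σ) = (Projectivization.rep ∘ f) ∘ σ := rfl
  rw [this]
  exact linearIndependent_equiv σ

lemma li_pair_swap {a b : V} (h : LinearIndependent K ![a, b]) :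
    LinearIndependent K ![b, a] := by
  rw [LinearIndependent.pair_iff] at h ⊢
  intro s t hst
  obtain ⟨h1, h2⟩ := h t s (by linear_combination (norm := module) hst)
  exact ⟨h2, h1⟩

lemma li_cons_iff {w : V} {u1 u2 : V} (hpair : LinearIndependent K ![u1, u2]) :
    LinearIndependent K ![w, u1, u2] ↔ w ∉ span K {u1, u2} := by
  have hr : Set.range ![u1, u2] = {u1, u2} := by
    ext x
    simp [Fin.exists_fin_two, or_comm]
  rw [show (![w, u1, u2] : Fin 3 → V) = Fin.cons w ![u1, u2] from rfl,
    linearIndependent_fin_cons, hr]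
  tauto

variable {v1 v2 v3 : V} (hli : LinearIndependent K ![v1, v2, v3])

include hli

lemma uniq3 {x y z x' y' z' : K}
    (h : x • v1 + y • v2 + z • v3 = x' • v1 + y' • v2 + z' • v3) :
    x = x' ∧ y = y' ∧ z = z' := by
  rw [Fintype.linearIndependent_iff] at hli
  have h0 : ∑ i, (![x - x', y - y', z - z'] i) • (![v1, v2, v3] i) = 0 := by
    simp only [Fin.sum_univ_three, sub_smul, Matrix.cons_val_zero, Matrix.cons_val_one,
      Matrix.head_cons, Matrix.cons_val_two, Matrix.tail_cons]
    rw [sub_add_sub_comm, sub_add_sub_comm, sub_eq_zero]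
    exact h
  have h1 := hli _ h0 0
  have h2 := hli _ h0 1
  have h3 := hli _ h0 2
  simp only [Matrix.cons_val_zero, Matrix.cons_val_one, Matrix.head_cons, Matrix.cons_val_two,
    Matrix.tail_cons, sub_eq_zero] at h1 h2 h3
  exact ⟨h1, h2, h3⟩

lemma memspan12 {x y z : K} : x • v1 + y • v2 + z • v3 ∈ span K {v1, v2} ↔ z = 0 := by
  rw [mem_span_pair]
  constructor
  · rintro ⟨a, b, hab⟩
    exact ((uniq3 hli (show a • v1 + b • v2 + (0:K) • v3 = x • v1 + y • v2 + z • v3 by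
      linear_combination (norm := module) hab)).2.2).symm
  · rintro rfl; exact ⟨x, y, by module⟩

lemma memspan13 {x y z : K} : x • v1 + y • v2 + z • v3 ∈ span K {v1, v3} ↔ y = 0 := by
  rw [mem_span_pair]
  constructor
  · rintro ⟨a, b, hab⟩
    exact ((uniq3 hli (show a • v1 + (0:K) • v2 + b • v3 = x • v1 + y • v2 + z • v3 by
      linear_combination (norm := module) hab)).2.1).symm
  · rintro rfl; exact ⟨x, z, by module⟩

lemma memspan23 {x y z : K} : x • v1 + y • v2 + z • v3 ∈ span K {v2, v3} ↔ x = 0 := by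
  rw [mem_span_pair]
  constructor
  · rintro ⟨a, b, hab⟩
    exact ((uniq3 hli (show (0:K) • v1 + a • v2 + b • v3 = x • v1 + y • v2 + z • v3 by
      linear_combination (norm := module) hab)).1).symm
  · rintro rfl; exact ⟨y, z, by module⟩

lemma memspan14 {x y z : K} :
    x • v1 + y • v2 + z • v3 ∈ span K {v1, v1 + v2 + v3} ↔ y = z := by
  rw [mem_span_pair]
  constructor
  · rintro ⟨a, b, hab⟩
    have := uniq3 hli (show (a+b) • v1 + b • v2 + b • v3 = x • v1 + y • v2 + z • v3 by
      linear_combination (norm := module) hab)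
    rw [← this.2.1, ← this.2.2]
  · rintro h
    exact ⟨x - y, y, by linear_combination (norm := module) h • v3⟩

lemma memspan24 {x y z : K} :
    x • v1 + y • v2 + z • v3 ∈ span K {v2, v1 + v2 + v3} ↔ x = z := by
  rw [mem_span_pair]
  constructor
  · rintro ⟨a, b, hab⟩
    have := uniq3 hli (show b • v1 + (a+b) • v2 + b • v3 = x • v1 + y • v2 + z • v3 by
      linear_combination (norm := module) hab)
    rw [← this.1, ← this.2.2]
  · rintro h
    exact ⟨y - x, x, by linear_combination (norm := module) h • v3⟩

lemma memspan34 {x y z : K} :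
    x • v1 + y • v2 + z • v3 ∈ span K {v3, v1 + v2 + v3} ↔ x = y := by
  rw [mem_span_pair]
  constructor
  · rintro ⟨a, b, hab⟩
    have := uniq3 hli (show b • v1 + b • v2 + (a+b) • v3 = x • v1 + y • v2 + z • v3 by
      linear_combination (norm := module) hab)
    rw [← this.1, ← this.2.1]
  · rintro h
    exact ⟨z - x, x, by linear_combination (norm := module) h • v2⟩

lemma pair12 : LinearIndependent K ![v1, v2] := by
  rw [LinearIndependent.pair_iff]
  intro s t h
  have := uniq3 hli (show s • v1 + t • v2 + (0:K) • v3 = (0:K) • v1 + (0:K) • v2 + (0:K) • v3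
    by linear_combination (norm := module) h)
  exact ⟨this.1, this.2.1⟩

lemma pair13 : LinearIndependent K ![v1, v3] := by
  rw [LinearIndependent.pair_iff]
  intro s t h
  have := uniq3 hli (show s • v1 + (0:K) • v2 + t • v3 = (0:K) • v1 + (0:K) • v2 + (0:K) • v3
    by linear_combination (norm := module) h)
  exact ⟨this.1, this.2.2⟩

lemma pair23 : LinearIndependent K ![v2, v3] := by
  rw [LinearIndependent.pair_iff]
  intro s t h
  have := uniq3 hli (show (0:K) • v1 + s • v2 + t • v3 = (0:K) • v1 + (0:K) • v2 + (0:K) • v3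
    by linear_combination (norm := module) h)
  exact ⟨this.2.1, this.2.2⟩

lemma pair14 : LinearIndependent K ![v1, v1 + v2 + v3] := by
  rw [LinearIndependent.pair_iff]
  intro s t h
  have := uniq3 hli (show (s+t) • v1 + t • v2 + t • v3 = (0:K) • v1 + (0:K) • v2 + (0:K) • v3
    by linear_combination (norm := module) h)
  have ht := this.2.1
  have hs := this.1
  constructor
  · rw [ht] at hs; simpa using hs
  · exact ht

lemma pair24 : LinearIndependent K ![v2, v1 + v2 + v3] := by
  rw [LinearIndependent.pair_iff]
  intro s t h
  have := uniq3 hli (show t • v1 + (s+t) • v2 + t • v3 = (0:K) • v1 + (0:K) • v2 + (0:K) • v3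
    by linear_combination (norm := module) h)
  have ht := this.1
  have hs := this.2.1
  constructor
  · rw [ht] at hs; simpa using hs
  · exact ht

lemma pair34 : LinearIndependent K ![v3, v1 + v2 + v3] := by
  rw [LinearIndependent.pair_iff]
  intro s t h
  have := uniq3 hli (show t • v1 + t • v2 + (s+t) • v3 = (0:K) • v1 + (0:K) • v2 + (0:K) • v3
    by linear_combination (norm := module) h)
  have ht := this.1
  have hs := this.2.2
  constructor
  · rw [ht] at hs; simpa using hs
  · exact ht

end Generic

lemma K4card : Nat.card (GaloisField 2 2) = 4 := by
  have := GaloisField.card 2 2 (by norm_num)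
  simp [Nat.card_eq_fintype_card, this]

lemma exists_omega : ∃ ω : GaloisField 2 2, ω ≠ 0 ∧ ω ≠ 1 ∧ ω ^ 2 = ω + 1 := by
  have hcard : Nat.card (GaloisField 2 2)ˣ = 3 := by
    rw [Nat.card_units, K4card]
  obtain ⟨g, hg⟩ := IsCyclic.exists_ofOrder_eq_natCard (α := (GaloisField 2 2)ˣ)
  rw [hcard] at hg
  have h3 : (g : GaloisField 2 2) ^ 3 = 1 := by
    have h : g ^ 3 = 1 := by rw [← hg]; exact pow_orderOf_eq_one g
    calc (g : GaloisField 2 2) ^ 3 = ((g ^ 3 : (GaloisField 2 2)ˣ) : GaloisField 2 2) := by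
          push_cast; ring
      _ = 1 := by rw [h]; rfl
  have h1 : (g : GaloisField 2 2) ≠ 1 := by
    intro h
    have : g = 1 := Units.ext h
    rw [this] at hg; simp at hg
  refine ⟨g, g.ne_zero, h1, ?_⟩
  have hchar : (2 : GaloisField 2 2) = 0 := by
    have := CharP.cast_eq_zero (GaloisField 2 2) 2
    simpa using this
  have key : ((g : GaloisField 2 2) - 1) * ((g : GaloisField 2 2) ^ 2 + g + 1) = 0 := by
    linear_combination h3
  rcases mul_eq_zero.mp key with h | h
  · exact absurd (by linear_combination h) h1
  · linear_combination h - ((g : GaloisField 2 2) + 1) * hchar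

noncomputable instance : Fintype (GaloisField 2 2) := Fintype.ofFinite _

lemma char2 : (2 : GaloisField 2 2) = 0 := by
  have := CharP.cast_eq_zero (GaloisField 2 2) 2
  simpa using this

lemma four_elems {ω : GaloisField 2 2} (h1 : ω ≠ 1) (hsq : ω ^ 2 = ω + 1)
    (x : GaloisField 2 2) : x = 0 ∨ x = 1 ∨ x = ω ∨ x = ω ^ 2 := by
  classical
  have h0 : ω ≠ 0 := by
    intro h; rw [h] at hsq; simpa using hsq
  have hsq0 : ω ^ 2 ≠ 0 := pow_ne_zero _ h0
  have hsq1 : ω ^ 2 ≠ 1 := by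
    rw [hsq]; intro h
    exact h0 (by linear_combination h)
  have hsqω : ω ^ 2 ≠ ω := by
    rw [hsq]; intro h
    exact one_ne_zero (by linear_combination h)
  have hcard : ({0, 1, ω, ω ^ 2} : Finset (GaloisField 2 2)).card = 4 := by
    rw [Finset.card_insert_of_notMem (by simp [Ne.symm h0, Ne.symm hsq0, (one_ne_zero).symm]),
      Finset.card_insert_of_notMem (by simp [Ne.symm h1, Ne.symm hsq1]),
      Finset.card_insert_of_notMem (by simp [Ne.symm hsqω]), Finset.card_singleton]
  have huniv : ({0, 1, ω, ω ^ 2} : Finset (GaloisField 2 2)) = Finset.univ := by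
    apply Finset.eq_univ_of_card
    rw [hcard, ← Nat.card_eq_fintype_card, K4card]
  have : x ∈ ({0, 1, ω, ω ^ 2} : Finset (GaloisField 2 2)) := by
    rw [huniv]; exact Finset.mem_univ x
  simpa using this

/-- No three distinct points of `S ⊆ ℙ²(𝔽₄)` are collinear (i.e. have linearly dependent
representative vectors). -/
def NoThreeCollinear (S : Set (ℙ (GaloisField 2 2) (Fin 3 → GaloisField 2 2))) : Prop :=
  ∀ p ∈ S, ∀ q ∈ S, ∀ r ∈ S, p ≠ q → p ≠ r → q ≠ r → ¬ Projectivization.Dependent ![p, q, r]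

/-- A four-element subset of `ℙ²(𝔽₄)` with no three points collinear can be extended to a
five-element subset with no three points collinear in exactly 2 ways. -/
theorem stmt_7 (S : Finset (ℙ (GaloisField 2 2) (Fin 3 → GaloisField 2 2)))
    (hcard : S.card = 4) (hS : NoThreeCollinear ↑S) :
    Nat.card {p : ℙ (GaloisField 2 2) (Fin 3 → GaloisField 2 2) //
      p ∉ S ∧ NoThreeCollinear (insert p (↑S : Set _))} = 2 := by
  classical
  rw [show (4:ℕ) = 3 + 1 from rfl, Finset.card_eq_succ] at hcard
  obtain ⟨P4, T, hP4T, rfl, hT3⟩ := hcard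
  obtain ⟨P1, P2, P3, h12, h13, h23, rfl⟩ := Finset.card_eq_three.mp hT3
  have h41 : P4 ≠ P1 := by rintro rfl; exact hP4T (by simp)
  have h42 : P4 ≠ P2 := by rintro rfl; exact hP4T (by simp)
  have h43 : P4 ≠ P3 := by rintro rfl; exact hP4T (by simp)
  set Sf : Finset (ℙ (GaloisField 2 2) (Fin 3 → GaloisField 2 2)) :=
    insert P4 {P1, P2, P3} with hSf
  have hm1f : P1 ∈ Sf := by simp [hSf]
  have hm2f : P2 ∈ Sf := by simp [hSf]
  have hm3f : P3 ∈ Sf := by simp [hSf]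
  have hm4f : P4 ∈ Sf := by simp [hSf]
  have hm1 : P1 ∈ (↑Sf : Set _) := hm1f
  have hm2 : P2 ∈ (↑Sf : Set _) := hm2f
  have hm3 : P3 ∈ (↑Sf : Set _) := hm3f
  have hm4 : P4 ∈ (↑Sf : Set _) := hm4f
  have hmemSf : ∀ Q, Q ∈ Sf → Q = P4 ∨ Q = P1 ∨ Q = P2 ∨ Q = P3 := by
    intro Q hQ
    simpa [hSf, Finset.mem_insert] using hQ
  -- representatives of the first three points form a basis
  have hnzrep : ∀ i, (![P1.rep, P2.rep, P3.rep] : Fin 3 → _) i ≠ 0 := by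
    intro i; fin_cases i <;> exact Projectivization.rep_nonzero _
  have hliT : LinearIndependent (GaloisField 2 2) ![P1.rep, P2.rep, P3.rep] := by
    by_contra hno
    exact hS P1 hm1 P2 hm2 P3 hm3 h12 h13 h23
      ((dep_mk_iff' ![P1.rep, P2.rep, P3.rep] hnzrep ![P1, P2, P3]
        (fun i => by fin_cases i <;> exact (Projectivization.mk_rep _).symm)).mpr hno)
  have hfr : Fintype.card (Fin 3)
      = Module.finrank (GaloisField 2 2) (Fin 3 → GaloisField 2 2) := by
    simp [Module.finrank_fin_fun]
  let bT := basisOfLinearIndependentOfCardEqFinrank hliT hfr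
  have hbT : ⇑bT = ![P1.rep, P2.rep, P3.rep] :=
    coe_basisOfLinearIndependentOfCardEqFinrank _ _
  set a1 := bT.repr P4.rep 0 with ha1def
  set a2 := bT.repr P4.rep 1 with ha2def
  set a3 := bT.repr P4.rep 2 with ha3def
  have hsum : a1 • P1.rep + a2 • P2.rep + a3 • P3.rep = P4.rep := by
    have h := bT.sum_repr P4.rep
    rw [Fin.sum_univ_three] at h
    rw [ha1def, ha2def, ha3def]
    simpa [hbT] using h
  have ha1 : a1 ≠ 0 := by
    intro h
    have hmem : P4.rep ∈ Submodule.span (GaloisField 2 2) {P2.rep, P3.rep} := by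
      rw [← hsum, h]
      exact (memspan23 hliT).mpr rfl
    have hnLI : ¬ LinearIndependent (GaloisField 2 2) ![P4.rep, P2.rep, P3.rep] :=
      fun hLI => ((li_cons_iff (pair23 hliT)).mp hLI) hmem
    exact hS P4 hm4 P2 hm2 P3 hm3 h42 h43 h23
      ((dep_mk_iff' ![P4.rep, P2.rep, P3.rep]
        (fun i => by fin_cases i <;> exact Projectivization.rep_nonzero _) ![P4, P2, P3]
        (fun i => by fin_cases i <;> exact (Projectivization.mk_rep _).symm)).mpr hnLI)
  have ha2 : a2 ≠ 0 := by
    intro h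
    have hmem : P4.rep ∈ Submodule.span (GaloisField 2 2) {P1.rep, P3.rep} := by
      rw [← hsum, h]
      exact (memspan13 hliT).mpr rfl
    have hnLI : ¬ LinearIndependent (GaloisField 2 2) ![P4.rep, P1.rep, P3.rep] :=
      fun hLI => ((li_cons_iff (pair13 hliT)).mp hLI) hmem
    exact hS P4 hm4 P1 hm1 P3 hm3 h41 h43 h13
      ((dep_mk_iff' ![P4.rep, P1.rep, P3.rep]
        (fun i => by fin_cases i <;> exact Projectivization.rep_nonzero _) ![P4, P1, P3]
        (fun i => by fin_cases i <;> exact (Projectivization.mk_rep _).symm)).mpr hnLI)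
  have ha3 : a3 ≠ 0 := by
    intro h
    have hmem : P4.rep ∈ Submodule.span (GaloisField 2 2) {P1.rep, P2.rep} := by
      rw [← hsum, h]
      exact (memspan12 hliT).mpr rfl
    have hnLI : ¬ LinearIndependent (GaloisField 2 2) ![P4.rep, P1.rep, P2.rep] :=
      fun hLI => ((li_cons_iff (pair12 hliT)).mp hLI) hmem
    exact hS P4 hm4 P1 hm1 P2 hm2 h41 h42 h12
      ((dep_mk_iff' ![P4.rep, P1.rep, P2.rep]
        (fun i => by fin_cases i <;> exact Projectivization.rep_nonzero _) ![P4, P1, P2]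
        (fun i => by fin_cases i <;> exact (Projectivization.mk_rep _).symm)).mpr hnLI)
  -- rescaled representatives
  set v1 := a1 • P1.rep with hv1def
  set v2 := a2 • P2.rep with hv2def
  set v3 := a3 • P3.rep with hv3def
  set v4 := P4.rep with hv4def
  have hv4 : v4 = v1 + v2 + v3 := hsum.symm
  have hv1 : v1 ≠ 0 := smul_ne_zero ha1 (Projectivization.rep_nonzero P1)
  have hv2 : v2 ≠ 0 := smul_ne_zero ha2 (Projectivization.rep_nonzero P2)
  have hv3 : v3 ≠ 0 := smul_ne_zero ha3 (Projectivization.rep_nonzero P3)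
  have hv4ne : v4 ≠ 0 := Projectivization.rep_nonzero P4
  have hli : LinearIndependent (GaloisField 2 2) ![v1, v2, v3] := by
    have h := hliT.units_smul ![Units.mk0 a1 ha1, Units.mk0 a2 ha2, Units.mk0 a3 ha3]
    have he : (![Units.mk0 a1 ha1, Units.mk0 a2 ha2, Units.mk0 a3 ha3]
        • ![P1.rep, P2.rep, P3.rep]) = ![v1, v2, v3] := by
      funext i; fin_cases i <;> simp [Pi.smul_apply', hv1def, hv2def, hv3def, Units.smul_def]
    rwa [he] at h
  have hP1 : P1 = Projectivization.mk (GaloisField 2 2) v1 hv1 := by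
    have h : Projectivization.mk (GaloisField 2 2) v1 hv1
        = Projectivization.mk (GaloisField 2 2) P1.rep (Projectivization.rep_nonzero P1) :=
      (Projectivization.mk_eq_mk_iff _ _ _ _ _).mpr ⟨Units.mk0 a1 ha1, rfl⟩
    rw [h, Projectivization.mk_rep]
  have hP2 : P2 = Projectivization.mk (GaloisField 2 2) v2 hv2 := by
    have h : Projectivization.mk (GaloisField 2 2) v2 hv2
        = Projectivization.mk (GaloisField 2 2) P2.rep (Projectivization.rep_nonzero P2) :=
      (Projectivization.mk_eq_mk_iff _ _ _ _ _).mpr ⟨Units.mk0 a2 ha2, rfl⟩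
    rw [h, Projectivization.mk_rep]
  have hP3 : P3 = Projectivization.mk (GaloisField 2 2) v3 hv3 := by
    have h : Projectivization.mk (GaloisField 2 2) v3 hv3
        = Projectivization.mk (GaloisField 2 2) P3.rep (Projectivization.rep_nonzero P3) :=
      (Projectivization.mk_eq_mk_iff _ _ _ _ _).mpr ⟨Units.mk0 a3 ha3, rfl⟩
    rw [h, Projectivization.mk_rep]
  have hP4 : P4 = Projectivization.mk (GaloisField 2 2) v4 hv4ne := (Projectivization.mk_rep P4).symm
  -- pair independence in terms of v4
  have pr14 : LinearIndependent (GaloisField 2 2) ![v1, v4] := by rw [hv4]; exact pair14 hli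
  have pr24 : LinearIndependent (GaloisField 2 2) ![v2, v4] := by rw [hv4]; exact pair24 hli
  have pr34 : LinearIndependent (GaloisField 2 2) ![v3, v4] := by rw [hv4]; exact pair34 hli
  obtain ⟨ω, hω0, hω1, hωsq⟩ := exists_omega
  have hω2_0 : ω ^ 2 ≠ 0 := pow_ne_zero _ hω0
  have hω2_1 : ω ^ 2 ≠ 1 := by
    rw [hωsq]; intro h; exact hω0 (by linear_combination h)
  have hωω2 : ω ≠ ω ^ 2 := by
    rw [hωsq]; intro h; exact one_ne_zero (α := GaloisField 2 2) (by linear_combination -h)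
  -- the key characterization
  have hchar : ∀ (w : Fin 3 → GaloisField 2 2) (hw : w ≠ 0) (x y z : GaloisField 2 2),
      x • v1 + y • v2 + z • v3 = w →
      ((Projectivization.mk (GaloisField 2 2) w hw ∉ Sf ∧
        NoThreeCollinear (insert (Projectivization.mk (GaloisField 2 2) w hw) (↑Sf : Set _)))
       ↔ (x ≠ 0 ∧ y ≠ 0 ∧ z ≠ 0 ∧ x ≠ y ∧ x ≠ z ∧ y ≠ z)) := by
    intro w hw x y z hxyz
    set M := Projectivization.mk (GaloisField 2 2) w hw with hMdef
    have step : ∀ (u u' : Fin 3 → GaloisField 2 2) (hu : u ≠ 0) (hu' : u' ≠ 0)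
        (Q R : ℙ (GaloisField 2 2) (Fin 3 → GaloisField 2 2)),
        Q = Projectivization.mk (GaloisField 2 2) u hu →
        R = Projectivization.mk (GaloisField 2 2) u' hu' →
        LinearIndependent (GaloisField 2 2) ![u, u'] →
        ((¬ Projectivization.Dependent ![M, Q, R]) ↔
          w ∉ Submodule.span (GaloisField 2 2) {u, u'}) := by
      intro u u' hu hu' Q R hQ hR hpr
      rw [dep_mk_iff' ![w, u, u']
        (fun i => by fin_cases i <;> first | exact hw | exact hu | exact hu') ![M, Q, R]
        (fun i => by fin_cases i <;> first | exact hMdef | exact hQ | exact hR),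
        not_not, li_cons_iff hpr]
    constructor
    · rintro ⟨hnot, hno3⟩
      have hmM : M ∈ insert M (↑Sf : Set _) := Set.mem_insert _ _
      have hm1' : P1 ∈ insert M (↑Sf : Set _) := Set.mem_insert_of_mem _ hm1
      have hm2' : P2 ∈ insert M (↑Sf : Set _) := Set.mem_insert_of_mem _ hm2
      have hm3' : P3 ∈ insert M (↑Sf : Set _) := Set.mem_insert_of_mem _ hm3
      have hm4' : P4 ∈ insert M (↑Sf : Set _) := Set.mem_insert_of_mem _ hm4
      have hMP1 : M ≠ P1 := fun h => hnot (by rw [h]; exact hm1f)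
      have hMP2 : M ≠ P2 := fun h => hnot (by rw [h]; exact hm2f)
      have hMP3 : M ≠ P3 := fun h => hnot (by rw [h]; exact hm3f)
      have hMP4 : M ≠ P4 := fun h => hnot (by rw [h]; exact hm4f)
      have c12 : z ≠ 0 := by
        have hnd := (step v1 v2 hv1 hv2 P1 P2 hP1 hP2 (pair12 hli)).mp
          (hno3 M hmM P1 hm1' P2 hm2' hMP1 hMP2 h12)
        rw [← hxyz, memspan12 hli] at hnd
        exact hnd
      have c13 : y ≠ 0 := by
        have hnd := (step v1 v3 hv1 hv3 P1 P3 hP1 hP3 (pair13 hli)).mp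
          (hno3 M hmM P1 hm1' P3 hm3' hMP1 hMP3 h13)
        rw [← hxyz, memspan13 hli] at hnd
        exact hnd
      have c23 : x ≠ 0 := by
        have hnd := (step v2 v3 hv2 hv3 P2 P3 hP2 hP3 (pair23 hli)).mp
          (hno3 M hmM P2 hm2' P3 hm3' hMP2 hMP3 h23)
        rw [← hxyz, memspan23 hli] at hnd
        exact hnd
      have c14 : y ≠ z := by
        have hnd := (step v1 v4 hv1 hv4ne P1 P4 hP1 hP4 pr14).mp
          (hno3 M hmM P1 hm1' P4 hm4' hMP1 hMP4 (Ne.symm h41))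
        rw [hv4, ← hxyz, memspan14 hli] at hnd
        exact hnd
      have c24 : x ≠ z := by
        have hnd := (step v2 v4 hv2 hv4ne P2 P4 hP2 hP4 pr24).mp
          (hno3 M hmM P2 hm2' P4 hm4' hMP2 hMP4 (Ne.symm h42))
        rw [hv4, ← hxyz, memspan24 hli] at hnd
        exact hnd
      have c34 : x ≠ y := by
        have hnd := (step v3 v4 hv3 hv4ne P3 P4 hP3 hP4 pr34).mp
          (hno3 M hmM P3 hm3' P4 hm4' hMP3 hMP4 (Ne.symm h43))
        rw [hv4, ← hxyz, memspan34 hli] at hnd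
        exact hnd
      exact ⟨c23, c13, c12, c34, c24, c14⟩
    · rintro ⟨hx, hy, hz, hxy, hxz, hyz⟩
      have m12 : w ∉ Submodule.span (GaloisField 2 2) {v1, v2} := by
        rw [← hxyz, memspan12 hli]; exact hz
      have m13 : w ∉ Submodule.span (GaloisField 2 2) {v1, v3} := by
        rw [← hxyz, memspan13 hli]; exact hy
      have m23 : w ∉ Submodule.span (GaloisField 2 2) {v2, v3} := by
        rw [← hxyz, memspan23 hli]; exact hx
      have m14 : w ∉ Submodule.span (GaloisField 2 2) {v1, v4} := by
        rw [hv4, ← hxyz, memspan14 hli]; exact hyz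
      have m24 : w ∉ Submodule.span (GaloisField 2 2) {v2, v4} := by
        rw [hv4, ← hxyz, memspan24 hli]; exact hxz
      have m34 : w ∉ Submodule.span (GaloisField 2 2) {v3, v4} := by
        rw [hv4, ← hxyz, memspan34 hli]; exact hxy
      have m21 : w ∉ Submodule.span (GaloisField 2 2) {v2, v1} := by
        rw [Set.pair_comm]; exact m12
      have m31 : w ∉ Submodule.span (GaloisField 2 2) {v3, v1} := by
        rw [Set.pair_comm]; exact m13
      have m32 : w ∉ Submodule.span (GaloisField 2 2) {v3, v2} := by
        rw [Set.pair_comm]; exact m23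
      have m41 : w ∉ Submodule.span (GaloisField 2 2) {v4, v1} := by
        rw [Set.pair_comm]; exact m14
      have m42 : w ∉ Submodule.span (GaloisField 2 2) {v4, v2} := by
        rw [Set.pair_comm]; exact m24
      have m43 : w ∉ Submodule.span (GaloisField 2 2) {v4, v3} := by
        rw [Set.pair_comm]; exact m34
      have hnotin : M ∉ Sf := by
        intro hmem
        rcases hmemSf M hmem with h | h | h | h
        · obtain ⟨c, hc⟩ := (Projectivization.mk_eq_mk_iff' _ _ _ hw hv4ne).mp (h ▸ hP4 ▸ rfl : M = Projectivization.mk (GaloisField 2 2) v4 hv4ne)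
          have := uniq3 hli (show c • v1 + c • v2 + c • v3 = x • v1 + y • v2 + z • v3 by
            rw [hxyz]; rw [hv4] at hc; linear_combination (norm := module) hc)
          exact hxy (this.1.symm.trans this.2.1)
        · obtain ⟨c, hc⟩ := (Projectivization.mk_eq_mk_iff' _ _ _ hw hv1).mp (h ▸ hP1 ▸ rfl : M = Projectivization.mk (GaloisField 2 2) v1 hv1)
          have := uniq3 hli (show c • v1 + (0:GaloisField 2 2) • v2 + (0:GaloisField 2 2) • v3
              = x • v1 + y • v2 + z • v3 by
            rw [hxyz]; linear_combination (norm := module) hc)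
          exact hy this.2.1.symm
        · obtain ⟨c, hc⟩ := (Projectivization.mk_eq_mk_iff' _ _ _ hw hv2).mp (h ▸ hP2 ▸ rfl : M = Projectivization.mk (GaloisField 2 2) v2 hv2)
          have := uniq3 hli (show (0:GaloisField 2 2) • v1 + c • v2 + (0:GaloisField 2 2) • v3
              = x • v1 + y • v2 + z • v3 by
            rw [hxyz]; linear_combination (norm := module) hc)
          exact hx this.1.symm
        · obtain ⟨c, hc⟩ := (Projectivization.mk_eq_mk_iff' _ _ _ hw hv3).mp (h ▸ hP3 ▸ rfl : M = Projectivization.mk (GaloisField 2 2) v3 hv3)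
          have := uniq3 hli (show (0:GaloisField 2 2) • v1 + (0:GaloisField 2 2) • v2 + c • v3
              = x • v1 + y • v2 + z • v3 by
            rw [hxyz]; linear_combination (norm := module) hc)
          exact hx this.1.symm
      refine ⟨hnotin, ?_⟩
      have hMgood : ∀ Q ∈ Sf, ∀ R ∈ Sf, Q ≠ R → ¬ Projectivization.Dependent ![M, Q, R] := by
        intro Q hQ R hR hQR
        rcases hmemSf Q hQ with h | h | h | h <;>
          rcases hmemSf R hR with h' | h' | h' | h'
        · exact absurd (h.trans h'.symm) hQR
        · rw [h, h']; exact (step v4 v1 hv4ne hv1 P4 P1 hP4 hP1 (li_pair_swap pr14)).mpr m41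
        · rw [h, h']; exact (step v4 v2 hv4ne hv2 P4 P2 hP4 hP2 (li_pair_swap pr24)).mpr m42
        · rw [h, h']; exact (step v4 v3 hv4ne hv3 P4 P3 hP4 hP3 (li_pair_swap pr34)).mpr m43
        · rw [h, h']; exact (step v1 v4 hv1 hv4ne P1 P4 hP1 hP4 pr14).mpr m14
        · exact absurd (h.trans h'.symm) hQR
        · rw [h, h']; exact (step v1 v2 hv1 hv2 P1 P2 hP1 hP2 (pair12 hli)).mpr m12
        · rw [h, h']; exact (step v1 v3 hv1 hv3 P1 P3 hP1 hP3 (pair13 hli)).mpr m13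
        · rw [h, h']; exact (step v2 v4 hv2 hv4ne P2 P4 hP2 hP4 pr24).mpr m24
        · rw [h, h']; exact (step v2 v1 hv2 hv1 P2 P1 hP2 hP1 (li_pair_swap (pair12 hli))).mpr m21
        · exact absurd (h.trans h'.symm) hQR
        · rw [h, h']; exact (step v2 v3 hv2 hv3 P2 P3 hP2 hP3 (pair23 hli)).mpr m23
        · rw [h, h']; exact (step v3 v4 hv3 hv4ne P3 P4 hP3 hP4 pr34).mpr m34
        · rw [h, h']; exact (step v3 v1 hv3 hv1 P3 P1 hP3 hP1 (li_pair_swap (pair13 hli))).mpr m31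
        · rw [h, h']; exact (step v3 v2 hv3 hv2 P3 P2 hP3 hP2 (li_pair_swap (pair23 hli))).mpr m32
        · exact absurd (h.trans h'.symm) hQR
      intro p hp q hq r hr hpq hpr hqr
      rw [Set.mem_insert_iff] at hp hq hr
      rcases hp with rfl | hp
      · rcases hq with rfl | hq
        · exact absurd rfl hpq
        · rcases hr with rfl | hr
          · exact absurd rfl hpr
          · exact hMgood q (Finset.mem_coe.mp hq) r (Finset.mem_coe.mp hr) hqr
      · rcases hq with rfl | hq
        · rcases hr with rfl | hr
          · exact absurd rfl hqr
          · intro hdep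
            have hcomp : (![p, M, r] ∘ ⇑(Equiv.swap (0 : Fin 3) 1)) = ![M, p, r] := by
              funext i; fin_cases i <;> simp [Equiv.swap_apply_def]
            have hdep' : Projectivization.Dependent ![M, p, r] := by
              rw [← hcomp]
              exact (dep_comp_equiv_iff (Equiv.swap 0 1) ![p, M, r]).mpr hdep
            exact hMgood p (Finset.mem_coe.mp hp) r (Finset.mem_coe.mp hr) hpr hdep'
        · rcases hr with rfl | hr
          · intro hdep
            have hcomp : (![M, p, q] ∘ ⇑(finRotate 3)) = ![p, q, M] := by
              funext i; fin_cases i <;> rfl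
            have hdep' : Projectivization.Dependent ![M, p, q] :=
              (dep_comp_equiv_iff (finRotate 3) ![M, p, q]).mp (by rw [hcomp]; exact hdep)
            exact hMgood p (Finset.mem_coe.mp hp) q (Finset.mem_coe.mp hq) hpq hdep'
          · exact hS p hp q hq r hr hpq hpr hqr
  -- the two extension points
  have hw1 : v1 + ω • v2 + ω ^ 2 • v3 ≠ 0 := by
    intro h
    have := uniq3 hli (show (1:GaloisField 2 2) • v1 + ω • v2 + ω ^ 2 • v3
        = (0:GaloisField 2 2) • v1 + (0:GaloisField 2 2) • v2 + (0:GaloisField 2 2) • v3 by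
      linear_combination (norm := module) h)
    exact one_ne_zero this.1
  have hw2 : v1 + ω ^ 2 • v2 + ω • v3 ≠ 0 := by
    intro h
    have := uniq3 hli (show (1:GaloisField 2 2) • v1 + ω ^ 2 • v2 + ω • v3
        = (0:GaloisField 2 2) • v1 + (0:GaloisField 2 2) • v2 + (0:GaloisField 2 2) • v3 by
      linear_combination (norm := module) h)
    exact one_ne_zero this.1
  set Q1 := Projectivization.mk (GaloisField 2 2) (v1 + ω • v2 + ω ^ 2 • v3) hw1 with hQ1def
  set Q2 := Projectivization.mk (GaloisField 2 2) (v1 + ω ^ 2 • v2 + ω • v3) hw2 with hQ2def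
  have hQ1good := (hchar _ hw1 1 ω (ω ^ 2) (by module)).mpr
    ⟨one_ne_zero, hω0, hω2_0, Ne.symm hω1, Ne.symm hω2_1, hωω2⟩
  have hQ2good := (hchar _ hw2 1 (ω ^ 2) ω (by module)).mpr
    ⟨one_ne_zero, hω2_0, hω0, Ne.symm hω2_1, Ne.symm hω1, Ne.symm hωω2⟩
  have hne12 : Q1 ≠ Q2 := by
    intro h
    rw [hQ1def, hQ2def, Projectivization.mk_eq_mk_iff'] at h
    obtain ⟨c, hc⟩ := h
    have := uniq3 hli (show c • v1 + (c * ω ^ 2) • v2 + (c * ω) • v3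
        = (1:GaloisField 2 2) • v1 + ω • v2 + ω ^ 2 • v3 by
      linear_combination (norm := module) hc)
    have hc1 := this.1
    have hc2 := this.2.1
    rw [hc1, one_mul] at hc2
    exact hωω2 hc2.symm
  -- identify the subtype with the pair {Q1, Q2}
  have hiff : ∀ p : ℙ (GaloisField 2 2) (Fin 3 → GaloisField 2 2),
      (p ∉ Sf ∧ NoThreeCollinear (insert p (↑Sf : Set _))) ↔ (p = Q1 ∨ p = Q2) := by
    intro p
    constructor
    · rintro ⟨h1, h2⟩
      let bV := basisOfLinearIndependentOfCardEqFinrank hli hfr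
      have hbV : ⇑bV = ![v1, v2, v3] := coe_basisOfLinearIndependentOfCardEqFinrank _ _
      set x := bV.repr p.rep 0 with hxdef
      set y := bV.repr p.rep 1 with hydef
      set z := bV.repr p.rep 2 with hzdef
      have hxyz : x • v1 + y • v2 + z • v3 = p.rep := by
        have h := bV.sum_repr p.rep
        rw [Fin.sum_univ_three] at h
        rw [hxdef, hydef, hzdef]
        simpa [hbV] using h
      have hp' : p = Projectivization.mk (GaloisField 2 2) p.rep (Projectivization.rep_nonzero p) :=
        (Projectivization.mk_rep p).symm
      have hcond := (hchar p.rep (Projectivization.rep_nonzero p) x y z hxyz).mp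
        (by rw [← hp']; exact ⟨h1, h2⟩)
      obtain ⟨hx, hy, hz, hxy, hxz, hyz⟩ := hcond
      set s := x⁻¹ * y with hsdef
      set t := x⁻¹ * z with htdef
      have hxs : x * s = y := mul_inv_cancel_left₀ hx y
      have hxt : x * t = z := mul_inv_cancel_left₀ hx z
      have hs0 : s ≠ 0 := mul_ne_zero (inv_ne_zero hx) hy
      have ht0 : t ≠ 0 := mul_ne_zero (inv_ne_zero hx) hz
      have hs1 : s ≠ 1 := by
        intro h
        apply hxy
        rw [h, mul_one] at hxs
        exact hxs
      have ht1 : t ≠ 1 := by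
        intro h
        apply hxz
        rw [h, mul_one] at hxt
        exact hxt
      have hst : s ≠ t := by
        intro h
        apply hyz
        rw [← hxs, ← hxt, h]
      have hmk : ∀ (s' t' : GaloisField 2 2) (hs' : s = s') (ht' : t = t')
          (hne : v1 + s' • v2 + t' • v3 ≠ 0),
          p = Projectivization.mk (GaloisField 2 2) (v1 + s' • v2 + t' • v3) hne := by
        intro s' t' hs' ht' hne
        rw [hp']
        rw [Projectivization.mk_eq_mk_iff']
        refine ⟨x, ?_⟩
        rw [← hs', ← ht', ← hxyz]
        linear_combination (norm := module) hxs • v2 + hxt • v3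
      rcases four_elems hω1 hωsq s with h | h | h | h
      · exact absurd h hs0
      · exact absurd h hs1
      · rcases four_elems hω1 hωsq t with h' | h' | h' | h'
        · exact absurd h' ht0
        · exact absurd h' ht1
        · exact absurd (h.trans h'.symm) hst
        · exact Or.inl (hmk ω (ω ^ 2) h h' hw1)
      · rcases four_elems hω1 hωsq t with h' | h' | h' | h'
        · exact absurd h' ht0
        · exact absurd h' ht1
        · exact Or.inr (hmk (ω ^ 2) ω h h' hw2)
        · exact absurd (h.trans h'.symm) hst
    · rintro (rfl | rfl)
      · exact hQ1good
      · exact hQ2good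
  have hiff2 : ∀ p : ℙ (GaloisField 2 2) (Fin 3 → GaloisField 2 2),
      (p ∉ Sf ∧ NoThreeCollinear (insert p (↑Sf : Set _)))
        ↔ p ∈ ({Q1, Q2} : Set (ℙ (GaloisField 2 2) (Fin 3 → GaloisField 2 2))) := by
    intro p
    rw [Set.mem_insert_iff, Set.mem_singleton_iff]
    exact hiff p
  have hfin : Nat.card ({Q1, Q2} : Set (ℙ (GaloisField 2 2) (Fin 3 → GaloisField 2 2))) = 2 := by
    rw [Nat.card_coe_set_eq]
    exact Set.ncard_pair hne12
  exact (Nat.card_congr (Equiv.subtypeEquivRight hiff2)).trans hfin
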